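/- Let m ∈ ℕ and 0 ≤ β ≤ α ≤ 1. Let v ∈ h^{-mβ}_0 (so in particular v ∈ h^{-mα}_0), let λ ∈ ℂ, and let a ∈ h^{m(2−α)} satisfy k^{2m}π^{2m} a(k) + Σ_{j∈ℤ} v(k−j) a(j) = λ a(k) for all k ∈ ℤ. Then a ∈ h^{m(2−β)}. In other words, every periodic eigenfunction of the operator (−1)^m d^{2m}/dx^{2m} + V with V ∈ H^{-mβ}_per, considered on the larger domain H^{m(2−α)}_per, already belongs to H^{m(2−β)}_per, so the periodic spectrum does not depend on the choice of α ∈ [β,1]. -/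

import Mathlib

open scoped BigOperators
noncomputable section

/-- The weight `⟨k⟩ = 1 + |k|`. -/
def wt (k : ℤ) : ℝ := 1 + |(k : ℝ)|

/-- `a ∈ h^s`: square-summability of `a` with weight `⟨k⟩^{2s}`. -/
def MemHs (s : ℝ) (a : ℤ → ℂ) : Prop :=
  Summable fun k : ℤ => wt k ^ (2 * s) * ‖a k‖ ^ 2

/-- The `h^s` norm. -/
def hsNorm (s : ℝ) (a : ℤ → ℂ) : ℝ :=
  Real.sqrt (∑' k : ℤ, wt k ^ (2 * s) * ‖a k‖ ^ 2)

/-- `λ` is a periodic eigenvalue of `v`. -/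
def IsPeriodicEigenvalue (m : ℕ) (α : ℝ) (v : ℤ → ℂ) (lam : ℂ) : Prop :=
  ∃ a : ℤ → ℂ, a ≠ 0 ∧ MemHs ((m : ℝ) * (2 - α)) a ∧
    ∀ k : ℤ, (k : ℂ) ^ (2 * m) * (Real.pi : ℂ) ^ (2 * m) * a k
      + ∑' j : ℤ, v (k - j) * a j = lam * a k

/-- `|λ - k^{2m} π^{2m}|`. -/
def diagAbs (m : ℕ) (lam : ℂ) (k : ℤ) : ℝ :=
  ‖lam - (k : ℂ) ^ (2 * m) * (Real.pi : ℂ) ^ (2 * m)‖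

/-- The matrix `S_{mλ}(k,j)`. -/
def Smat (m : ℕ) (v : ℤ → ℂ) (lam : ℂ) (k j : ℤ) : ℂ :=
  v (k - j) / ((Real.sqrt (diagAbs m lam k) * Real.sqrt (diagAbs m lam j) : ℝ) : ℂ)

/-- The matrix `S` defines a bounded operator on `ℓ²(ℤ, ℂ)` of norm at most `c`. -/
def MatOpNormLE (S : ℤ → ℤ → ℂ) (c : ℝ) : Prop :=
  ∃ T : lp (fun _ : ℤ => ℂ) 2 →L[ℂ] lp (fun _ : ℤ => ℂ) 2,
    ‖T‖ ≤ c ∧ ∀ a : lp (fun _ : ℤ => ℂ) 2, ∀ k : ℤ, T a k = ∑' j : ℤ, S k j * a j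

/-- The matrix `S` defines a bounded operator on `ℓ²(ℤ, ℂ)` of norm less than `c`. -/
def MatOpNormLT (S : ℤ → ℤ → ℂ) (c : ℝ) : Prop :=
  ∃ T : lp (fun _ : ℤ => ℂ) 2 →L[ℂ] lp (fun _ : ℤ => ℂ) 2,
    ‖T‖ < c ∧ ∀ a : lp (fun _ : ℤ => ℂ) 2, ∀ k : ℤ, T a k = ∑' j : ℤ, S k j * a j

/-- `Ext_M = {λ : Re λ ≤ |Im λ| - M}`. -/
def ExtSet (M : ℝ) : Set ℂ := {lam : ℂ | lam.re ≤ |lam.im| - M}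

/-- `Vert^m_n(r)`. -/
def VertSet (m n : ℕ) (r : ℝ) : Set ℂ :=
  {lam : ℂ | |(lam - (n : ℂ) ^ (2 * m) * (Real.pi : ℂ) ^ (2 * m)).re| ≤ (n : ℝ) ^ m * Real.pi ^ (2 * m)
    ∧ r ≤ ‖lam - (n : ℂ) ^ (2 * m) * (Real.pi : ℂ) ^ (2 * m)‖}

/-!
Away from finitely many `k` one has `|λ - k^{2m}π^{2m}| ≥ ⟨k⟩^{2m}`, so the eigenvalue equation
gives `⟨k⟩^{2m} |a(k)| ≤ (|v| ⋆ |a|)(k)`, and `a ∈ h^{2m-σ}` as soon as `|v| ⋆ |a| ∈ h^{-σ}`.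
For `v ∈ h^{-σ}`, `a ∈ h^u`, `0 ≤ σ ≤ u` this convolution estimate holds in two regimes:
if `u > σ + 1/2`, Peetre's inequality `⟨k - j⟩ ≤ ⟨k⟩⟨j⟩` reduces it to Young's `ℓ² ⋆ ℓ¹ ⊆ ℓ²`;
if `σ > 1/2`, split `⟨k - j⟩^σ ≤ 2^σ (⟨k⟩^σ + ⟨j⟩^σ)`: the first piece is again `ℓ² ⋆ ℓ¹`, the
second an `ℓ² ⋆ ℓ²`, hence bounded, convolution, made square summable by the factor `⟨k⟩^{-σ}`.
Two such steps lead from `u = m(2 - α)` to `a ∈ h^{2m - mβ}`: first with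
`σ = max(mβ, 3/4)`, then with `σ = mβ`.
-/

open Filter Real

lemma wt_pos (k : ℤ) : 0 < wt k := by
  unfold wt; positivity

lemma one_le_wt (k : ℤ) : 1 ≤ wt k :=
  le_add_of_nonneg_right (abs_nonneg _)

lemma wt_sub_le_add (k j : ℤ) : wt (k - j) ≤ wt k + wt j := by
  unfold wt; push_cast; linarith [abs_sub (k : ℝ) j]

lemma wt_sub_le_mul (k j : ℤ) : wt (k - j) ≤ wt k * wt j := by
  unfold wt; push_cast
  nlinarith [abs_sub (k : ℝ) j, abs_nonneg (k : ℝ), abs_nonneg (j : ℝ)]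

lemma sq_wt_rpow (k : ℤ) (s : ℝ) : (wt k ^ s) ^ 2 = wt k ^ (2 * s) := by
  rw [← rpow_natCast, ← rpow_mul (wt_pos k).le, mul_comm]; norm_num

lemma add_rpow_le_two_rpow_mul {x y σ : ℝ} (hx : 0 ≤ x) (hy : 0 ≤ y) (hσ : 0 ≤ σ) :
    (x + y) ^ σ ≤ 2 ^ σ * (x ^ σ + y ^ σ) := by
  wlog hxy : x ≤ y generalizing x y
  · simpa only [add_comm] using this hy hx (le_of_not_ge hxy)
  calc (x + y) ^ σ ≤ (2 * y) ^ σ := by gcongr; linarith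
    _ = 2 ^ σ * y ^ σ := mul_rpow zero_le_two hy
    _ ≤ 2 ^ σ * (x ^ σ + y ^ σ) := by gcongr; linarith [rpow_nonneg hx σ]

lemma wt_sub_rpow_le {σ : ℝ} (hσ : 0 ≤ σ) (k j : ℤ) :
    wt (k - j) ^ σ ≤ 2 ^ σ * (wt k ^ σ + wt j ^ σ) :=
  (rpow_le_rpow (wt_pos _).le (wt_sub_le_add k j) hσ).trans
    (add_rpow_le_two_rpow_mul (wt_pos k).le (wt_pos j).le hσ)

lemma summable_wt_rpow_neg {p : ℝ} (hp : 1 < p) : Summable fun k : ℤ => wt k ^ (-p) := by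
  have hnat : Summable fun n : ℕ => ((n : ℝ) + 1) ^ (-p) := by
    exact_mod_cast (summable_nat_add_iff 1).2 (summable_nat_rpow.2 (by linarith))
  refine Summable.of_nat_of_neg (hnat.congr fun n => ?_) (hnat.congr fun n => ?_) <;>
    simp [wt, add_comm]

section RealSequences

variable {ι : Type*}

lemma summable_mul_of_summable_sq {f g : ι → ℝ} (hf : Summable fun i => f i ^ 2)
    (hg : Summable fun i => g i ^ 2) : Summable fun i => f i * g i := by
  refine ((hf.add hg).div_const 2).of_norm_bounded fun i => ?_
  rw [norm_mul, Real.norm_eq_abs, Real.norm_eq_abs, ← sq_abs (f i), ← sq_abs (g i)]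
  linarith [two_mul_le_add_sq |f i| |g i|]

lemma sq_tsum_mul_le {f g : ι → ℝ} (hf0 : 0 ≤ f) (hg0 : 0 ≤ g)
    (hf : Summable fun i => f i ^ 2) (hg : Summable fun i => g i ^ 2) :
    (∑' i, f i * g i) ^ 2 ≤ (∑' i, f i ^ 2) * ∑' i, g i ^ 2 := by
  have holder := inner_le_Lp_mul_Lq_tsum_of_nonneg .two_two hf0 hg0
    (by simpa only [rpow_two] using hf) (by simpa only [rpow_two] using hg)
  simp only [rpow_two, ← sqrt_eq_rpow] at holder
  rw [← sq_sqrt (mul_nonneg (tsum_nonneg fun i => sq_nonneg (f i))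
    (tsum_nonneg fun i => sq_nonneg (g i))), sqrt_mul (tsum_nonneg fun i => sq_nonneg (f i))]
  exact pow_le_pow_left₀ (tsum_nonneg fun i => mul_nonneg (hf0 i) (hg0 i)) holder 2

lemma tsum_le_tsum_of_nonneg_of_le {f g : ι → ℝ} (hf : 0 ≤ f) (hfg : ∀ i, f i ≤ g i)
    (hg : Summable g) : ∑' i, f i ≤ ∑' i, g i :=
  (hg.of_nonneg_of_le hf hfg).tsum_le_tsum hfg hg

lemma summable_sq_of_le_mul_add {x y z : ι → ℝ} (c : ℝ) (hx : 0 ≤ x)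
    (hxyz : ∀ i, x i ≤ c * (y i + z i)) (hy : Summable fun i => y i ^ 2)
    (hz : Summable fun i => z i ^ 2) : Summable fun i => x i ^ 2 := by
  refine .of_nonneg_of_le (fun i => sq_nonneg _) (fun i => ?_) ((hy.add hz).mul_left (2 * c ^ 2))
  have hx' := hxyz i
  calc x i ^ 2 ≤ (c * (y i + z i)) ^ 2 := pow_le_pow_left₀ (hx i) hx' 2
    _ ≤ 2 * c ^ 2 * (y i ^ 2 + z i ^ 2) := by
      rw [mul_pow]; nlinarith [sq_nonneg (y i - z i), sq_nonneg c]

lemma norm_tsum_le_tsum_norm_of_finiteDimensional {E : Type*} [NormedAddCommGroup E]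
    [NormedSpace ℝ E] [FiniteDimensional ℝ E] (f : ι → E) : ‖∑' i, f i‖ ≤ ∑' i, ‖f i‖ := by
  by_cases hf : Summable fun i => ‖f i‖
  · exact norm_tsum_le_tsum_norm hf
  · rw [tsum_eq_zero_of_not_summable (summable_norm_iff.not.1 hf), norm_zero]
    exact tsum_nonneg fun i => norm_nonneg _

end RealSequences

def conv (f g : ℤ → ℝ) (k : ℤ) : ℝ := ∑' j, f (k - j) * g j

section Convolution

variable {f g : ℤ → ℝ}

lemma summable_sq_comp_sub (hf : Summable fun l => f l ^ 2) (k : ℤ) :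
    Summable fun j => f (k - j) ^ 2 :=
  (Equiv.subLeft k).summable_iff.2 hf

lemma tsum_sq_comp_sub (k : ℤ) : ∑' j, f (k - j) ^ 2 = ∑' l, f l ^ 2 :=
  (Equiv.subLeft k).tsum_eq fun l => f l ^ 2

lemma conv_nonneg (hf0 : 0 ≤ f) (hg0 : 0 ≤ g) (k : ℤ) : 0 ≤ conv f g k :=
  tsum_nonneg fun j => mul_nonneg (hf0 _) (hg0 j)

lemma summable_conv_summand (hf : Summable fun l => f l ^ 2) (hg : Summable fun j => g j ^ 2)
    (k : ℤ) : Summable fun j => f (k - j) * g j :=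
  summable_mul_of_summable_sq (summable_sq_comp_sub hf k) hg

lemma sq_conv_le (hf0 : 0 ≤ f) (hg0 : 0 ≤ g) (hf : Summable fun l => f l ^ 2)
    (hg : Summable fun j => g j ^ 2) (k : ℤ) :
    conv f g k ^ 2 ≤ (∑' l, f l ^ 2) * ∑' j, g j ^ 2 := by
  have := sq_tsum_mul_le (fun j => hf0 (k - j)) hg0 (summable_sq_comp_sub hf k) hg
  rwa [tsum_sq_comp_sub] at this

/-- Young's inequality `ℓ² ⋆ ℓ¹ ⊆ ℓ²`. -/
lemma summable_sq_conv (hf0 : 0 ≤ f) (hg0 : 0 ≤ g) (hf : Summable fun l => f l ^ 2)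
    (hg : Summable g) : Summable fun k => conv f g k ^ 2 := by
  have hfubini : Summable fun k => ∑' j, f (k - j) ^ 2 * g j := by
    let shear : ℤ × ℤ ≃ ℤ × ℤ :=
      ⟨fun p => (p.1 + p.2, p.2), fun p => (p.1 - p.2, p.2), fun p => by simp, fun p => by simp⟩
    have hprod : Summable fun p : ℤ × ℤ => f (p.1 - p.2) ^ 2 * g p.2 := by
      refine shear.summable_iff.1 ((hf.mul_of_nonneg hg (fun l => sq_nonneg _) hg0).congr ?_)
      simp [shear]
    exact ((summable_prod_of_nonneg fun p => mul_nonneg (sq_nonneg _) (hg0 _)).1 hprod).2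
  refine .of_nonneg_of_le (fun k => sq_nonneg _) (fun k => ?_) (hfubini.mul_right (∑' j, g j))
  -- Cauchy–Schwarz against the weights `√g`
  have hsqrt : ∀ j, sqrt (g j) ^ 2 = g j := fun j => sq_sqrt (hg0 j)
  have hbound : ∀ j, (f (k - j) * sqrt (g j)) ^ 2 ≤ (∑' l, f l ^ 2) * g j := fun j => by
    rw [mul_pow, hsqrt]
    refine mul_le_mul_of_nonneg_right ?_ (hg0 j)
    rw [← tsum_sq_comp_sub k]
    exact (summable_sq_comp_sub hf k).le_tsum j fun i _ => sq_nonneg _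
  have := sq_tsum_mul_le (fun j => mul_nonneg (hf0 (k - j)) (sqrt_nonneg (g j)))
    (fun j => sqrt_nonneg (g j))
    (.of_nonneg_of_le (fun j => sq_nonneg _) hbound (hg.mul_left _))
    (hg.congr fun j => (hsqrt j).symm)
  simpa only [conv, mul_assoc, mul_self_sqrt (hg0 _), mul_pow, hsqrt] using this

end Convolution

def weightedNorm (s : ℝ) (a : ℤ → ℂ) (k : ℤ) : ℝ := wt k ^ s * ‖a k‖

section Weighted

variable {s t σ : ℝ} {a v : ℤ → ℂ}

lemma weightedNorm_nonneg : 0 ≤ weightedNorm s a :=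
  fun k => mul_nonneg (rpow_nonneg (wt_pos k).le s) (norm_nonneg _)

lemma weightedNorm_zero : weightedNorm 0 a = fun k => ‖a k‖ := by
  ext k; simp [weightedNorm]

lemma wt_rpow_neg_mul_rpow (k : ℤ) (s : ℝ) : wt k ^ (-s) * wt k ^ s = 1 := by
  rw [← rpow_add (wt_pos k), neg_add_cancel, rpow_zero]

lemma norm_eq_wt_rpow_mul_weightedNorm (σ : ℝ) (k : ℤ) :
    ‖v k‖ = wt k ^ σ * weightedNorm (-σ) v k := by
  rw [weightedNorm, ← mul_assoc, mul_comm (wt k ^ σ), wt_rpow_neg_mul_rpow, one_mul]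

lemma memHs_iff_summable_sq : MemHs s a ↔ Summable fun k => weightedNorm s a k ^ 2 := by
  simp only [MemHs, weightedNorm, mul_pow, sq_wt_rpow]

lemma MemHs.mono (ha : MemHs t a) (hst : s ≤ t) : MemHs s a :=
  .of_nonneg_of_le (fun k => mul_nonneg (rpow_nonneg (wt_pos k).le _) (sq_nonneg _))
    (fun k => mul_le_mul_of_nonneg_right
      (rpow_le_rpow_of_exponent_le (one_le_wt k) (by linarith)) (sq_nonneg _)) ha

lemma MemHs.summable_weightedNorm (ha : MemHs s a) (hts : t + 1 / 2 < s) :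
    Summable (weightedNorm t a) := by
  have hdecay : Summable fun k => (wt k ^ (t - s)) ^ 2 := by
    simp only [sq_wt_rpow]
    exact (summable_wt_rpow_neg (p := 2 * (s - t)) (by linarith)).congr fun k => by ring_nf
  refine (summable_mul_of_summable_sq hdecay (memHs_iff_summable_sq.1 ha)).congr fun k => ?_
  rw [weightedNorm, weightedNorm, ← mul_assoc, ← rpow_add (wt_pos k), sub_add_cancel]

end Weighted

section ConvolutionEstimate

variable {σ u : ℝ} {v a : ℤ → ℂ}

lemma wt_rpow_neg_le_mul (hσ : 0 ≤ σ) (k j : ℤ) :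
    wt k ^ (-σ) ≤ wt j ^ σ * wt (k - j) ^ (-σ) :=
  calc wt k ^ (-σ) = wt k ^ (-σ) * wt (k - j) ^ σ * wt (k - j) ^ (-σ) := by
        rw [mul_assoc, mul_comm (wt (k - j) ^ σ), wt_rpow_neg_mul_rpow, mul_one]
    _ ≤ wt k ^ (-σ) * (wt k ^ σ * wt j ^ σ) * wt (k - j) ^ (-σ) := by
        have hpeetre : wt (k - j) ^ σ ≤ wt k ^ σ * wt j ^ σ := by
          rw [← mul_rpow (wt_pos k).le (wt_pos j).le]
          exact rpow_le_rpow (wt_pos _).le (wt_sub_le_mul k j) hσ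
        gcongr
        · exact rpow_nonneg (wt_pos _).le _
        · exact rpow_nonneg (wt_pos _).le _
    _ = wt j ^ σ * wt (k - j) ^ (-σ) := by
        rw [← mul_assoc, wt_rpow_neg_mul_rpow, one_mul]

lemma wt_rpow_neg_mul_conv_le (hσ : 0 ≤ σ) (hv : MemHs (-σ) v) (ha : MemHs σ a) (k : ℤ) :
    wt k ^ (-σ) * conv (fun l => ‖v l‖) (fun j => ‖a j‖) k
      ≤ conv (weightedNorm (-σ) v) (weightedNorm σ a) k := by
  rw [conv, conv, ← tsum_mul_left]
  refine tsum_le_tsum_of_nonneg_of_le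
    (fun j => mul_nonneg (rpow_nonneg (wt_pos k).le _) (by positivity)) (fun j => ?_)
    (summable_conv_summand (memHs_iff_summable_sq.1 hv) (memHs_iff_summable_sq.1 ha) k)
  calc wt k ^ (-σ) * (‖v (k - j)‖ * ‖a j‖)
      ≤ wt j ^ σ * wt (k - j) ^ (-σ) * (‖v (k - j)‖ * ‖a j‖) := by
        gcongr; exact wt_rpow_neg_le_mul hσ k j
    _ = weightedNorm (-σ) v (k - j) * weightedNorm σ a j := by
        simp only [weightedNorm]; ring

lemma wt_rpow_neg_mul_conv_le_add (hσ : 0 ≤ σ) (hσu : σ ≤ u) (hv : MemHs (-σ) v)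
    (ha : MemHs u a) (k : ℤ) :
    wt k ^ (-σ) * conv (fun l => ‖v l‖) (fun j => ‖a j‖) k
      ≤ 2 ^ σ * (conv (weightedNorm (-σ) v) (fun j => ‖a j‖) k
        + wt k ^ (-σ) * conv (weightedNorm (-σ) v) (weightedNorm σ a) k) := by
  have hF := memHs_iff_summable_sq.1 hv
  have hsumm₀ := summable_conv_summand hF
    (memHs_iff_summable_sq.1 (ha.mono (by linarith : (0 : ℝ) ≤ u))) k
  rw [weightedNorm_zero] at hsumm₀
  have hsummσ := summable_conv_summand hF (memHs_iff_summable_sq.1 (ha.mono hσu)) k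
  rw [conv, conv, conv, ← tsum_mul_left, ← tsum_mul_left, ← hsumm₀.tsum_add (hsummσ.mul_left _),
    ← tsum_mul_left]
  refine tsum_le_tsum_of_nonneg_of_le
    (fun j => mul_nonneg (rpow_nonneg (wt_pos k).le _) (by positivity)) (fun j => ?_)
    ((hsumm₀.add (hsummσ.mul_left _)).mul_left _)
  rw [norm_eq_wt_rpow_mul_weightedNorm σ (k - j)]
  calc wt k ^ (-σ) * (wt (k - j) ^ σ * weightedNorm (-σ) v (k - j) * ‖a j‖)
      ≤ wt k ^ (-σ) * (2 ^ σ * (wt k ^ σ + wt j ^ σ) * weightedNorm (-σ) v (k - j) * ‖a j‖) := by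
        gcongr
        · exact rpow_nonneg (wt_pos k).le _
        · exact weightedNorm_nonneg _
        · exact wt_sub_rpow_le hσ k j
    _ = 2 ^ σ * (weightedNorm (-σ) v (k - j) * ‖a j‖
          + wt k ^ (-σ) * (weightedNorm (-σ) v (k - j) * weightedNorm σ a j)) := by
        simp only [weightedNorm]
        linear_combination (2 ^ σ * (wt (k - j) ^ (-σ) * ‖v (k - j)‖) * ‖a j‖)
          * wt_rpow_neg_mul_rpow k σ

lemma summable_sq_wt_rpow_neg_mul_conv (hσ : 0 ≤ σ) (hσu : σ ≤ u)
    (hcases : 1 / 2 < σ ∨ σ + 1 / 2 < u) (hv : MemHs (-σ) v) (ha : MemHs u a) :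
    Summable fun k => (wt k ^ (-σ) * conv (fun l => ‖v l‖) (fun j => ‖a j‖) k) ^ 2 := by
  have hF := memHs_iff_summable_sq.1 hv
  have hnonneg : 0 ≤ fun k => wt k ^ (-σ) * conv (fun l => ‖v l‖) (fun j => ‖a j‖) k :=
    fun k => mul_nonneg (rpow_nonneg (wt_pos k).le _)
      (conv_nonneg (fun _ => norm_nonneg _) (fun _ => norm_nonneg _) k)
  rcases hcases with hσ_half | hu
  · have hh := memHs_iff_summable_sq.1 (ha.mono hσu)
    refine summable_sq_of_le_mul_add (2 ^ σ) hnonneg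
      (wt_rpow_neg_mul_conv_le_add hσ hσu hv ha) ?_ ?_
    · have ha1 := ha.summable_weightedNorm (t := 0) (by linarith)
      rw [weightedNorm_zero] at ha1
      exact summable_sq_conv weightedNorm_nonneg (fun _ => norm_nonneg _) hF ha1
    · refine .of_nonneg_of_le (fun k => sq_nonneg _) (fun k => ?_)
        ((summable_wt_rpow_neg (p := 2 * σ) (by linarith)).mul_right
          ((∑' l, weightedNorm (-σ) v l ^ 2) * ∑' j, weightedNorm σ a j ^ 2))
      rw [mul_pow, sq_wt_rpow, mul_neg]
      exact mul_le_mul_of_nonneg_left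
        (sq_conv_le weightedNorm_nonneg weightedNorm_nonneg hF hh k)
        (rpow_nonneg (wt_pos k).le _)
  · refine .of_nonneg_of_le (fun k => sq_nonneg _)
      (fun k => pow_le_pow_left₀ (hnonneg k)
        (wt_rpow_neg_mul_conv_le hσ hv (ha.mono hσu) k) 2)
      (summable_sq_conv weightedNorm_nonneg weightedNorm_nonneg hF
        (ha.summable_weightedNorm hu))

end ConvolutionEstimate

lemma eventually_wt_pow_le_diagAbs {m : ℕ} (hm : 0 < m) (lam : ℂ) :
    ∀ᶠ k : ℤ in cofinite, wt k ^ (2 * m) ≤ diagAbs m lam k := by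
  filter_upwards [(tendsto_norm_cocompact_atTop.comp Int.tendsto_coe_cofinite).eventually_ge_atTop
    (max 1 ‖lam‖)] with k hk
  set K := |(k : ℝ)|
  have hK1 : 1 ≤ K := le_of_max_le_left hk
  have hlam : ‖lam‖ ≤ K := le_of_max_le_right hk
  have hdiag : π ^ (2 * m) * K ^ (2 * m) - ‖lam‖ ≤ diagAbs m lam k := by
    have hnorm : ‖(k : ℂ) ^ (2 * m) * (π : ℂ) ^ (2 * m)‖ = π ^ (2 * m) * K ^ (2 * m) := by
      rw [norm_mul, norm_pow, norm_pow, Complex.norm_intCast, Complex.norm_real,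
        Real.norm_of_nonneg pi_pos.le, mul_comm]
    rw [diagAbs, norm_sub_rev, ← hnorm]
    exact norm_sub_norm_le _ _
  have hwt : wt k ^ (2 * m) ≤ 4 ^ m * K ^ (2 * m) := by
    calc wt k ^ (2 * m) ≤ (2 * K) ^ (2 * m) := by
          rw [wt]; gcongr; linarith
      _ = 4 ^ m * K ^ (2 * m) := by rw [mul_pow, pow_mul]; norm_num
  have hpi : (9 : ℝ) ^ m ≤ π ^ (2 * m) := by
    rw [pow_mul]; gcongr; nlinarith [pi_gt_three]
  have h49 : (4 : ℝ) ^ m + 1 ≤ 9 ^ m :=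
    calc (4 : ℝ) ^ m + 1 ≤ 4 ^ m + 5 ^ m := by gcongr; exact one_le_pow₀ (by norm_num)
      _ ≤ (4 + 5) ^ m := pow_add_pow_le (by norm_num) (by norm_num) hm.ne'
      _ = 9 ^ m := by norm_num
  have hKpow : K ≤ K ^ (2 * m) := le_self_pow₀ hK1 (by omega)
  have hKpow0 : 0 ≤ K ^ (2 * m) := pow_nonneg (zero_le_one.trans hK1) _
  calc wt k ^ (2 * m) ≤ 4 ^ m * K ^ (2 * m) := hwt
    _ ≤ 9 ^ m * K ^ (2 * m) - K ^ (2 * m) := by nlinarith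
    _ ≤ π ^ (2 * m) * K ^ (2 * m) - ‖lam‖ := by nlinarith
    _ ≤ diagAbs m lam k := hdiag

lemma diagAbs_mul_norm_le_conv {m : ℕ} {v a : ℤ → ℂ} {lam : ℂ}
    (heq : ∀ k : ℤ, (k : ℂ) ^ (2 * m) * (π : ℂ) ^ (2 * m) * a k
      + ∑' j : ℤ, v (k - j) * a j = lam * a k) (k : ℤ) :
    diagAbs m lam k * ‖a k‖ ≤ conv (fun l => ‖v l‖) (fun j => ‖a j‖) k := by
  have hres : (lam - (k : ℂ) ^ (2 * m) * (π : ℂ) ^ (2 * m)) * a k = ∑' j, v (k - j) * a j := by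
    rw [sub_mul, ← heq k]; ring
  rw [diagAbs, ← norm_mul, hres, conv]
  simpa only [norm_mul] using norm_tsum_le_tsum_norm_of_finiteDimensional fun j => v (k - j) * a j

theorem memHs_of_eigenvector {m : ℕ} (hm : 0 < m) {σ u : ℝ} (hσ : 0 ≤ σ) (hσu : σ ≤ u)
    (hcases : 1 / 2 < σ ∨ σ + 1 / 2 < u) {v a : ℤ → ℂ} (hv : MemHs (-σ) v) (ha : MemHs u a)
    {lam : ℂ} (heq : ∀ k : ℤ, (k : ℂ) ^ (2 * m) * (π : ℂ) ^ (2 * m) * a k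
      + ∑' j : ℤ, v (k - j) * a j = lam * a k) :
    MemHs (2 * m - σ) a := by
  rw [memHs_iff_summable_sq]
  refine (summable_sq_wt_rpow_neg_mul_conv hσ hσu hcases hv ha).of_norm_bounded_eventually ?_
  filter_upwards [eventually_wt_pow_le_diagAbs hm lam] with k hk
  rw [norm_pow, Real.norm_of_nonneg (weightedNorm_nonneg k)]
  refine pow_le_pow_left₀ (weightedNorm_nonneg k) ?_ 2
  calc weightedNorm (2 * m - σ) a k = wt k ^ (-σ) * (wt k ^ (2 * m) * ‖a k‖) := by
        rw [weightedNorm, sub_eq_neg_add, rpow_add (wt_pos k), mul_assoc]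
        norm_cast
    _ ≤ wt k ^ (-σ) * (diagAbs m lam k * ‖a k‖) := by
        gcongr; exact rpow_nonneg (wt_pos k).le _
    _ ≤ wt k ^ (-σ) * conv (fun l => ‖v l‖) (fun j => ‖a j‖) k := by
        gcongr
        · exact rpow_nonneg (wt_pos k).le _
        · exact diagAbs_mul_norm_le_conv heq k

theorem statement19_general (m : ℕ) (hm : 0 < m) (α β : ℝ)
    (hβ0 : 0 ≤ β) (hβα : β ≤ α) (hα1 : α ≤ 1)
    (v : ℤ → ℂ) (hv : MemHs (-((m : ℝ) * β)) v)
    (lam : ℂ) (a : ℤ → ℂ) (ha : MemHs ((m : ℝ) * (2 - α)) a)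
    (heq : ∀ k : ℤ, (k : ℂ) ^ (2 * m) * (Real.pi : ℂ) ^ (2 * m) * a k
      + ∑' j : ℤ, v (k - j) * a j = lam * a k) :
    MemHs ((m : ℝ) * (2 - β)) a := by
  have hm1 : (1 : ℝ) ≤ m := by exact_mod_cast hm
  have hmβ : (m : ℝ) * β ≤ m * α := by gcongr
  have hmα : (m : ℝ) * α ≤ m := by nlinarith
  set σ₁ : ℝ := max ((m : ℝ) * β) (3 / 4)
  have hσ₁ : σ₁ ≤ m := max_le (by linarith) (by linarith)
  have hstep₁ : MemHs (2 * m - σ₁) a :=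
    memHs_of_eigenvector hm (by positivity) (by nlinarith)
      (.inl (by linarith [le_max_right ((m : ℝ) * β) (3 / 4)]))
      (hv.mono (by linarith [le_max_left ((m : ℝ) * β) (3 / 4)])) ha heq
  have hcases₂ : 1 / 2 < (m : ℝ) * β ∨ (m : ℝ) * β + 1 / 2 < 2 * m - σ₁ := by
    rcases lt_or_ge (1 / 2) ((m : ℝ) * β) with h | h
    · exact .inl h
    · have : σ₁ ≤ 3 / 4 := max_le (by linarith) le_rfl
      exact .inr (by linarith)
  have hstep₂ : MemHs (2 * m - m * β) a :=
    memHs_of_eigenvector hm (by positivity) (by linarith) hcases₂ hv hstep₁ heq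
  rwa [show (m : ℝ) * (2 - β) = 2 * m - m * β by ring]

theorem statement19 (m : ℕ) (hm : 0 < m) (α β : ℝ)
    (hβ0 : 0 ≤ β) (hβα : β ≤ α) (hα1 : α ≤ 1)
    (v : ℤ → ℂ) (hv : MemHs (-((m : ℝ) * β)) v) (hv0 : v 0 = 0)
    (lam : ℂ) (a : ℤ → ℂ) (ha : MemHs ((m : ℝ) * (2 - α)) a)
    (heq : ∀ k : ℤ, (k : ℂ) ^ (2 * m) * (Real.pi : ℂ) ^ (2 * m) * a k
      + ∑' j : ℤ, v (k - j) * a j = lam * a k) :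
    MemHs ((m : ℝ) * (2 - β)) a :=
  statement19_general m hm α β hβ0 hβα hα1 v hv lam a ha heq
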